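/- Let ν ≠ 1 be sufficiently close to 1. Suppose ρ : (0,∞) → (0,∞) satisfies ρ(ξ) ≃ ξ^{−1/2} for 0 < ξ ≤ 1 and ρ(ξ) ≃ ξ^{1/2} for ξ ≥ 1, and suppose φ₀(·;γ), φ₁(·;γ) are, for every γ > 0, solutions of y'' + γ τ^{2(1/ν−1)} y = 0 satisfying: φ₀(τ;γ) = γ^{ν/4} τ (1 + O(γ τ^{2/ν})) and φ₁(τ;γ) = γ^{−ν/4}(1 + O(γ^{ν/2} τ)) for 0 < γ^{1/2} τ^{1/ν} ≤ 1, and |φ_j(τ;γ)| ≲ γ^{−1/4} τ^{−(1/ν−1)/2} (j = 0,1) for γ^{1/2} τ^{1/ν} ≥ 1. Define λ̃(τ) = (ντ)^{−(1/ν−1)} and H_c(τ,σ,ξ) = λ̃(τ)^{5/2} ρ(ξ)^{−1/2} [φ₁(τ; ξτ^{−2(1/ν−1)}) φ₀(σ; ξτ^{−2(1/ν−1)}) − φ₀(τ; ξτ^{−2(1/ν−1)}) φ₁(σ; ξτ^{−2(1/ν−1)})] λ̃(σ)^{−5/2} ρ((σ/τ)^{2(1/ν−1)} ξ)^{1/2}.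 Then for all 1 ≤ τ ≤ σ and ξ > 0: |H_c(τ,σ,ξ)| ≲ (σ/τ)^{(7/2)|1/ν−1|} ξ^{−1/2} if τ ξ^{1/2} ≥ 1 and σ ξ^{1/2} ≥ 1; |H_c(τ,σ,ξ)| ≲ (σ/τ)^{(7/2)|1/ν−1|} τ^{(1−ν)/2} ξ^{−(1+ν)/4} if τ ξ^{1/2} ≤ 1 ≤ σ ξ^{1/2}; and |H_c(τ,σ,ξ)| ≲ (σ/τ)^{(7/2)|1/ν−1|} σ if τ ξ^{1/2} ≤ 1 and σ ξ^{1/2} ≤ 1. -/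

import Mathlib

noncomputable section

open Real

/-- `λ̃(τ) = (ντ)^{-(1/ν-1)}`. -/
def lamt (ν τ : ℝ) : ℝ := (ν * τ) ^ (-(1 / ν - 1))

/-- The kernel `H_c(τ,σ,ξ)` of the solution operator for the transport equation,
built by variation of constants along the characteristics from the fundamental system
`Φ₀(γ,·), Φ₁(γ,·)` and the spectral density `ρ`. -/
def Hker (ν : ℝ) (ρ : ℝ → ℝ) (Φ₀ Φ₁ : ℝ → ℝ → ℝ) (τ σ ξ : ℝ) : ℝ :=
  lamt ν τ ^ ((5 : ℝ) / 2) * (ρ ξ) ^ (-(1 : ℝ) / 2) *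
    (Φ₁ (ξ * τ ^ (-2 * (1 / ν - 1))) τ * Φ₀ (ξ * τ ^ (-2 * (1 / ν - 1))) σ
      - Φ₀ (ξ * τ ^ (-2 * (1 / ν - 1))) τ * Φ₁ (ξ * τ ^ (-2 * (1 / ν - 1))) σ) *
    (lamt ν σ ^ ((5 : ℝ) / 2))⁻¹ * (ρ ((σ / τ) ^ (2 * (1 / ν - 1)) * ξ)) ^ ((1 : ℝ) / 2)

/-!
Write `a = 1/ν - 1`, `s = σ/τ`, `γ = ξ τ^{-2a}` and `ξ' = s^{2a} ξ`. Then
`H_c = (λ̃(τ)/λ̃(σ))^{5/2} (ρ(ξ')/ρ(ξ))^{1/2} K` with `K = Φ₁(γ,τ)Φ₀(γ,σ) - Φ₀(γ,τ)Φ₁(γ,σ)`.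
The first factor is `s^{5a/2}`. Since `ρ` is comparable to `max(ξ^{1/2}, ξ^{-1/2})`, which
changes by at most a factor `s^{|a|}` when `ξ` is multiplied by `s^{2a}`, the second factor is
`≲ s^{|a|/2}`.

The Bessel argument `z(t) = γ^{1/2} t^{1/ν}` equals `τ ξ^{1/2} (t/τ)^{1/ν}`, so `τ ξ^{1/2}`
decides the regime at `τ`. Bounding `|K| ≤ |Φ₁(τ)||Φ₀(σ)| + |Φ₀(τ)||Φ₁(σ)|` by the asymptotics
gives `|K| ≲ s^{-a/2} ξ^{-1/2}` if `τ ξ^{1/2} ≥ 1`, while if `τ ξ^{1/2} ≤ 1` both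
`|K| ≲ σ` and `|K| ≲ σ z(σ)^{-(1+ν)/2} = s^{-a/2} τ^{(1-ν)/2} ξ^{-(1+ν)/4}` hold: whichever
regime `σ` is in, one of them is the direct estimate and the other follows from it because
`z(σ) ≤ 1` or `z(σ) ≥ 1`. The powers of `s` add up to at most `s^{(5/2 + 1/2 + 1/2)|a|}`.
-/

/-- `ν · besselArg ν γ t` is the argument of the Bessel functions solving
`y'' + γ t^{2(1/ν-1)} y = 0`; it separates the two asymptotic regimes of `Φ₀, Φ₁`. -/
def besselArg (ν γ t : ℝ) : ℝ := γ ^ ((1 : ℝ) / 2) * t ^ (1 / ν)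

def SmallArgAsymptotics (ν C₀ : ℝ) (Φ₀ Φ₁ : ℝ → ℝ → ℝ) : Prop :=
  ∀ γ > (0 : ℝ), ∀ τ > (0 : ℝ), besselArg ν γ τ ≤ 1 →
    |Φ₀ γ τ - γ ^ (ν / 4) * τ| ≤ C₀ * (γ ^ (ν / 4) * τ) * (γ * τ ^ (2 / ν)) ∧
    |Φ₁ γ τ - γ ^ (-ν / 4)| ≤ C₀ * γ ^ (-ν / 4) * (γ ^ (ν / 2) * τ)

def LargeArgBounds (ν C₀ : ℝ) (Φ₀ Φ₁ : ℝ → ℝ → ℝ) : Prop :=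
  ∀ γ > (0 : ℝ), ∀ τ > (0 : ℝ), 1 ≤ besselArg ν γ τ →
    |Φ₀ γ τ| ≤ C₀ * γ ^ (-(1 : ℝ) / 4) * τ ^ (-(1 / ν - 1) / 2) ∧
    |Φ₁ γ τ| ≤ C₀ * γ ^ (-(1 : ℝ) / 4) * τ ^ (-(1 / ν - 1) / 2)

/-- The variation-of-constants kernel of `y'' + γ t^{2(1/ν-1)} y = 0` built from `Φ₀, Φ₁`. -/
def cauchyKernel (Φ₀ Φ₁ : ℝ → ℝ → ℝ) (γ τ σ : ℝ) : ℝ :=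
  Φ₁ γ τ * Φ₀ γ σ - Φ₀ γ τ * Φ₁ γ σ

def modelDensity (ξ : ℝ) : ℝ := max (ξ ^ ((1 : ℝ) / 2)) (ξ ^ (-(1 : ℝ) / 2))

def SpectralDensityBounds (ρ : ℝ → ℝ) (c₁ c₂ : ℝ) : Prop :=
  ∀ ξ > 0, c₁ * modelDensity ξ ≤ ρ ξ ∧ ρ ξ ≤ c₂ * modelDensity ξ

section PowerLaws

/-! These identities between monomials in positive variables are proved in logarithmic
coordinates, where they become linear. -/

variable {ν γ τ σ ξ t : ℝ}

lemma besselArg_sq (hγ : 0 < γ) (ht : 0 < t) (hν : 0 < ν) :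
    besselArg ν γ t ^ (2 : ℕ) = γ * t ^ (2 / ν) := by
  rw [besselArg, ← rpow_natCast, ← exp_log hγ, ← exp_log ht]
  simp only [← exp_mul, ← exp_add]
  congr 1
  field_simp
  ring

lemma besselArg_rpow (hγ : 0 < γ) (ht : 0 < t) (hν : 0 < ν) :
    besselArg ν γ t ^ ν = γ ^ (ν / 2) * t := by
  rw [besselArg, ← exp_log hγ, ← exp_log ht]
  simp only [← exp_mul, ← exp_add]
  congr 1
  field_simp

lemma rpow_mul_rpow_eq_mul_besselArg (hγ : 0 < γ) (hσ : 0 < σ) (hν : 0 < ν) :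
    γ ^ (-ν / 4) * (γ ^ (-(1 : ℝ) / 4) * σ ^ (-(1 / ν - 1) / 2))
      = σ * besselArg ν γ σ ^ (-(1 + ν) / 2) := by
  rw [besselArg, ← exp_log hγ, ← exp_log hσ]
  simp only [← exp_mul, ← exp_add]
  congr 1
  field_simp
  ring

lemma besselArg_rescaled (hτ : 0 < τ) (ht : 0 < t) (hξ : 0 < ξ) (hν : 0 < ν) :
    besselArg ν (ξ * τ ^ (-2 * (1 / ν - 1))) t
      = τ * ξ ^ ((1 : ℝ) / 2) * (t / τ) ^ (1 / ν) := by
  rw [besselArg, ← exp_log hτ, ← exp_log ht, ← exp_log hξ]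
  simp only [← exp_mul, ← exp_add, ← exp_sub]
  congr 1
  field_simp
  ring

lemma mul_besselArg_rescaled (hτ : 0 < τ) (hσ : 0 < σ) (hξ : 0 < ξ) (hν : 0 < ν) :
    σ * besselArg ν (ξ * τ ^ (-2 * (1 / ν - 1))) σ ^ (-(1 + ν) / 2)
      = (σ / τ) ^ (-(1 / ν - 1) / 2) * (τ ^ ((1 - ν) / 2) * ξ ^ (-(1 + ν) / 4)) := by
  rw [besselArg, ← exp_log hτ, ← exp_log hσ, ← exp_log hξ]
  simp only [← exp_mul, ← exp_add, ← exp_sub]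
  congr 1
  field_simp
  ring

lemma large_envelope_rescaled (hτ : 0 < τ) (hσ : 0 < σ) (hξ : 0 < ξ) (hν : 0 < ν) :
    (ξ * τ ^ (-2 * (1 / ν - 1))) ^ (-(1 : ℝ) / 4) * τ ^ (-(1 / ν - 1) / 2) *
        ((ξ * τ ^ (-2 * (1 / ν - 1))) ^ (-(1 : ℝ) / 4) * σ ^ (-(1 / ν - 1) / 2))
      = (σ / τ) ^ (-(1 / ν - 1) / 2) * ξ ^ (-(1 : ℝ) / 2) := by
  rw [← exp_log hτ, ← exp_log hσ, ← exp_log hξ]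
  simp only [← exp_mul, ← exp_add, ← exp_sub]
  congr 1
  field_simp
  ring

lemma lamt_rpow_mul_inv (hν : 0 < ν) (hτ : 0 < τ) (hσ : 0 < σ) :
    lamt ν τ ^ ((5 : ℝ) / 2) * (lamt ν σ ^ ((5 : ℝ) / 2))⁻¹
      = (σ / τ) ^ (5 / 2 * (1 / ν - 1)) := by
  rw [lamt, lamt, ← exp_log hν, ← exp_log hτ, ← exp_log hσ]
  simp only [← exp_mul, ← exp_add, ← exp_sub, ← exp_neg]
  congr 1
  field_simp
  ring

end PowerLaws

lemma abs_le_one_add_mul_of_abs_sub_le {x m C ε : ℝ} (h : |x - m| ≤ C * m * ε) (hC : 0 ≤ C)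
    (hm : 0 ≤ m) (hε : ε ≤ 1) : |x| ≤ (1 + C) * m := by
  have hCm : C * m * ε ≤ C * m := mul_le_of_le_one_right (mul_nonneg hC hm) hε
  calc |x| = |(x - m) + m| := by rw [sub_add_cancel]
    _ ≤ |x - m| + |m| := abs_add_le _ _
    _ ≤ (1 + C) * m := by rw [abs_of_nonneg hm]; linarith

section Envelopes

variable {ν C₀ γ t : ℝ} {Φ₀ Φ₁ : ℝ → ℝ → ℝ}

lemma SmallArgAsymptotics.abs_le (h : SmallArgAsymptotics ν C₀ Φ₀ Φ₁) (hν : 0 < ν)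
    (hC₀ : 0 ≤ C₀) (hγ : 0 < γ) (ht : 0 < t) (hz : besselArg ν γ t ≤ 1) :
    |Φ₀ γ t| ≤ (1 + C₀) * (γ ^ (ν / 4) * t) ∧ |Φ₀ γ t| ≤ (1 + C₀) * γ ^ (-ν / 4) ∧
      |Φ₁ γ t| ≤ (1 + C₀) * γ ^ (-ν / 4) := by
  obtain ⟨h₀, h₁⟩ := h γ hγ t ht hz
  have hz0 : 0 ≤ besselArg ν γ t := by unfold besselArg; positivity
  have hsq : γ * t ^ (2 / ν) ≤ 1 := besselArg_sq hγ ht hν ▸ pow_le_one₀ hz0 hz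
  have hpow : γ ^ (ν / 2) * t ≤ 1 := besselArg_rpow hγ ht hν ▸ rpow_le_one hz0 hz hν.le
  have hΦ₀ := abs_le_one_add_mul_of_abs_sub_le h₀ hC₀ (by positivity) hsq
  have hmono : γ ^ (ν / 4) * t ≤ γ ^ (-ν / 4) :=
    calc γ ^ (ν / 4) * t = γ ^ (-ν / 4) * (γ ^ (ν / 2) * t) := by
          rw [← mul_assoc, ← rpow_add hγ]; ring_nf
      _ ≤ γ ^ (-ν / 4) := mul_le_of_le_one_right (by positivity) hpow
  exact ⟨hΦ₀, hΦ₀.trans (by gcongr),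
    abs_le_one_add_mul_of_abs_sub_le h₁ hC₀ (by positivity) hpow⟩

lemma LargeArgBounds.nonneg (h : LargeArgBounds ν C₀ Φ₀ Φ₁) : 0 ≤ C₀ := by
  have h₀ := (h 1 one_pos 1 one_pos (by norm_num [besselArg])).1
  simp only [one_rpow, mul_one] at h₀
  exact (abs_nonneg _).trans h₀

lemma LargeArgBounds.abs_le (h : LargeArgBounds ν C₀ Φ₀ Φ₁) (hγ : 0 < γ) (ht : 0 < t)
    (hz : 1 ≤ besselArg ν γ t) :
    |Φ₀ γ t| ≤ (1 + C₀) * (γ ^ (-(1 : ℝ) / 4) * t ^ (-(1 / ν - 1) / 2)) ∧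
      |Φ₁ γ t| ≤ (1 + C₀) * (γ ^ (-(1 : ℝ) / 4) * t ^ (-(1 / ν - 1) / 2)) := by
  obtain ⟨h₀, h₁⟩ := h γ hγ t ht hz
  have hC : C₀ * γ ^ (-(1 : ℝ) / 4) * t ^ (-(1 / ν - 1) / 2)
      ≤ (1 + C₀) * (γ ^ (-(1 : ℝ) / 4) * t ^ (-(1 / ν - 1) / 2)) := by
    rw [mul_assoc]; gcongr; linarith
  exact ⟨h₀.trans hC, h₁.trans hC⟩

end Envelopes

section CauchyKernel

variable {ν C₀ γ τ σ : ℝ} {Φ₀ Φ₁ : ℝ → ℝ → ℝ}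

lemma besselArg_le_besselArg (hν : 0 < ν) (hγ : 0 ≤ γ) (hτ : 0 ≤ τ) (hτσ : τ ≤ σ) :
    besselArg ν γ τ ≤ besselArg ν γ σ := by
  unfold besselArg; gcongr

lemma abs_cauchyKernel_le :
    |cauchyKernel Φ₀ Φ₁ γ τ σ| ≤ |Φ₁ γ τ| * |Φ₀ γ σ| + |Φ₀ γ τ| * |Φ₁ γ σ| := by
  rw [← abs_mul, ← abs_mul]
  exact abs_sub _ _

lemma abs_cauchyKernel_le_of_large (hlg : LargeArgBounds ν C₀ Φ₀ Φ₁) (hν : 0 < ν)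
    (hγ : 0 < γ) (hτ : 0 < τ) (hτσ : τ ≤ σ) (hz : 1 ≤ besselArg ν γ τ) :
    |cauchyKernel Φ₀ Φ₁ γ τ σ| ≤ 2 * (1 + C₀) ^ 2 *
      (γ ^ (-(1 : ℝ) / 4) * τ ^ (-(1 / ν - 1) / 2) *
        (γ ^ (-(1 : ℝ) / 4) * σ ^ (-(1 / ν - 1) / 2))) := by
  have hσ := hτ.trans_le hτσ
  obtain ⟨h₀τ, h₁τ⟩ := hlg.abs_le hγ hτ hz
  obtain ⟨h₀σ, h₁σ⟩ :=
    hlg.abs_le hγ hσ (hz.trans (besselArg_le_besselArg hν hγ.le hτ.le hτσ))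
  have hC₀ := hlg.nonneg
  calc _ ≤ _ := abs_cauchyKernel_le
    _ ≤ _ := add_le_add (mul_le_mul h₁τ h₀σ (abs_nonneg _) (by positivity))
        (mul_le_mul h₀τ h₁σ (abs_nonneg _) (by positivity))
    _ = _ := by ring

lemma abs_cauchyKernel_le_of_small_small (hsm : SmallArgAsymptotics ν C₀ Φ₀ Φ₁)
    (hν : 0 < ν) (hC₀ : 0 ≤ C₀) (hγ : 0 < γ) (hτ : 0 < τ) (hτσ : τ ≤ σ)
    (hz : besselArg ν γ σ ≤ 1) :
    |cauchyKernel Φ₀ Φ₁ γ τ σ| ≤ 2 * (1 + C₀) ^ 2 * σ := by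
  have hσ := hτ.trans_le hτσ
  obtain ⟨h₀τ, -, h₁τ⟩ :=
    hsm.abs_le hν hC₀ hγ hτ ((besselArg_le_besselArg hν hγ.le hτ.le hτσ).trans hz)
  obtain ⟨h₀σ, -, h₁σ⟩ := hsm.abs_le hν hC₀ hγ hσ hz
  have hcancel : γ ^ (-ν / 4) * γ ^ (ν / 4) = 1 := by
    rw [← rpow_add hγ, neg_div, neg_add_cancel, rpow_zero]
  calc _ ≤ _ := abs_cauchyKernel_le
    _ ≤ _ := add_le_add (mul_le_mul h₁τ h₀σ (abs_nonneg _) (by positivity))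
        (mul_le_mul h₀τ h₁σ (abs_nonneg _) (by positivity))
    _ = (1 + C₀) ^ 2 * (γ ^ (-ν / 4) * γ ^ (ν / 4)) * (σ + τ) := by ring
    _ ≤ 2 * (1 + C₀) ^ 2 * σ := by rw [hcancel]; nlinarith [sq_nonneg (1 + C₀)]

lemma abs_cauchyKernel_le_of_small_large (hsm : SmallArgAsymptotics ν C₀ Φ₀ Φ₁)
    (hlg : LargeArgBounds ν C₀ Φ₀ Φ₁) (hν : 0 < ν) (hγ : 0 < γ) (hτ : 0 < τ) (hτσ : τ ≤ σ)
    (hzτ : besselArg ν γ τ ≤ 1) (hzσ : 1 ≤ besselArg ν γ σ) :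
    |cauchyKernel Φ₀ Φ₁ γ τ σ|
      ≤ 2 * (1 + C₀) ^ 2 * (σ * besselArg ν γ σ ^ (-(1 + ν) / 2)) := by
  have hσ := hτ.trans_le hτσ
  have hC₀ := hlg.nonneg
  obtain ⟨-, h₀τ, h₁τ⟩ := hsm.abs_le hν hC₀ hγ hτ hzτ
  obtain ⟨h₀σ, h₁σ⟩ := hlg.abs_le hγ hσ hzσ
  rw [← rpow_mul_rpow_eq_mul_besselArg hγ hσ hν]
  calc _ ≤ _ := abs_cauchyKernel_le
    _ ≤ _ := add_le_add (mul_le_mul h₁τ h₀σ (abs_nonneg _) (by positivity))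
        (mul_le_mul h₀τ h₁σ (abs_nonneg _) (by positivity))
    _ = _ := by ring

lemma abs_cauchyKernel_le_of_small (hsm : SmallArgAsymptotics ν C₀ Φ₀ Φ₁)
    (hlg : LargeArgBounds ν C₀ Φ₀ Φ₁) (hν : 0 < ν) (hγ : 0 < γ) (hτ : 0 < τ) (hτσ : τ ≤ σ) (hzτ : besselArg ν γ τ ≤ 1) :
    |cauchyKernel Φ₀ Φ₁ γ τ σ| ≤ 2 * (1 + C₀) ^ 2 * σ ∧
      |cauchyKernel Φ₀ Φ₁ γ τ σ|
        ≤ 2 * (1 + C₀) ^ 2 * (σ * besselArg ν γ σ ^ (-(1 + ν) / 2)) := by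
  have hσ := hτ.trans_le hτσ
  have hz : 0 < besselArg ν γ σ := by unfold besselArg; positivity
  have hexp : -(1 + ν) / 2 ≤ 0 := by linarith
  rcases le_total (besselArg ν γ σ) 1 with hzσ | hzσ
  · have h := abs_cauchyKernel_le_of_small_small hsm hν hlg.nonneg hγ hτ hτσ hzσ
    refine ⟨h, h.trans ?_⟩
    gcongr
    exact le_mul_of_one_le_right hσ.le (one_le_rpow_of_pos_of_le_one_of_nonpos hz hzσ hexp)
  · have h := abs_cauchyKernel_le_of_small_large hsm hlg hν hγ hτ hτσ hzτ hzσ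
    refine ⟨h.trans ?_, h⟩
    gcongr
    exact mul_le_of_le_one_right hσ.le (rpow_le_one_of_one_le_of_nonpos hzσ hexp)

end CauchyKernel

section Rescaled

variable {ν C₀ τ σ ξ : ℝ} {Φ₀ Φ₁ : ℝ → ℝ → ℝ}

lemma besselArg_rescaled_self (hτ : 0 < τ) (hξ : 0 < ξ) (hν : 0 < ν) :
    besselArg ν (ξ * τ ^ (-2 * (1 / ν - 1))) τ = τ * ξ ^ ((1 : ℝ) / 2) := by
  rw [besselArg_rescaled hτ hτ hξ hν, div_self hτ.ne', one_rpow, mul_one]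

lemma abs_cauchyKernel_rescaled_le_of_one_le (hlg : LargeArgBounds ν C₀ Φ₀ Φ₁) (hν : 0 < ν)
    (hτ : 0 < τ) (hτσ : τ ≤ σ) (hξ : 0 < ξ) (hx : 1 ≤ τ * ξ ^ ((1 : ℝ) / 2)) :
    |cauchyKernel Φ₀ Φ₁ (ξ * τ ^ (-2 * (1 / ν - 1))) τ σ|
      ≤ 2 * (1 + C₀) ^ 2 * (σ / τ) ^ (|1 / ν - 1| / 2) * ξ ^ (-(1 : ℝ) / 2) := by
  have hσ := hτ.trans_le hτσ
  have hs : 1 ≤ σ / τ := (one_le_div hτ).2 hτσ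
  have h := abs_cauchyKernel_le_of_large hlg hν (by positivity) hτ hτσ
    ((besselArg_rescaled_self hτ hξ hν).symm ▸ hx)
  rw [large_envelope_rescaled hτ hσ hξ hν, ← mul_assoc] at h
  refine h.trans ?_
  have := hlg.nonneg
  gcongr
  exact neg_le_abs _

lemma abs_cauchyKernel_rescaled_le_of_le_one (hsm : SmallArgAsymptotics ν C₀ Φ₀ Φ₁)
    (hlg : LargeArgBounds ν C₀ Φ₀ Φ₁) (hν : 0 < ν) (hτ : 0 < τ) (hτσ : τ ≤ σ) (hξ : 0 < ξ)
    (hx : τ * ξ ^ ((1 : ℝ) / 2) ≤ 1) :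
    |cauchyKernel Φ₀ Φ₁ (ξ * τ ^ (-2 * (1 / ν - 1))) τ σ|
        ≤ 2 * (1 + C₀) ^ 2 * (σ / τ) ^ (|1 / ν - 1| / 2) *
            (τ ^ ((1 - ν) / 2) * ξ ^ (-(1 + ν) / 4)) ∧
      |cauchyKernel Φ₀ Φ₁ (ξ * τ ^ (-2 * (1 / ν - 1))) τ σ| ≤ 2 * (1 + C₀) ^ 2 * σ := by
  have hσ := hτ.trans_le hτσ
  have hs : 1 ≤ σ / τ := (one_le_div hτ).2 hτσ
  obtain ⟨hσbound, hzbound⟩ := abs_cauchyKernel_le_of_small hsm hlg hν (by positivity) hτ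
    hτσ ((besselArg_rescaled_self hτ hξ hν).symm ▸ hx)
  rw [mul_besselArg_rescaled hτ hσ hξ hν, ← mul_assoc] at hzbound
  refine ⟨hzbound.trans ?_, hσbound⟩
  have := hlg.nonneg
  gcongr
  exact neg_le_abs _

end Rescaled

section Density

variable {ρ : ℝ → ℝ} {c₁ c₂ ξ s : ℝ}

lemma modelDensity_pos (hξ : 0 < ξ) : 0 < modelDensity ξ :=
  lt_max_of_lt_left (rpow_pos_of_pos hξ _)

lemma modelDensity_of_le_one (hξ : 0 < ξ) (hξ₁ : ξ ≤ 1) :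
    modelDensity ξ = ξ ^ (-(1 : ℝ) / 2) :=
  max_eq_right ((rpow_le_one hξ.le hξ₁ (by norm_num)).trans
    (one_le_rpow_of_pos_of_le_one_of_nonpos hξ hξ₁ (by norm_num)))

lemma modelDensity_of_one_le (hξ₁ : 1 ≤ ξ) : modelDensity ξ = ξ ^ ((1 : ℝ) / 2) :=
  max_eq_left ((rpow_le_one_of_one_le_of_nonpos hξ₁ (by norm_num)).trans
    (one_le_rpow hξ₁ (by norm_num)))

lemma modelDensity_rpow_mul_le (hs : 1 ≤ s) (hξ : 0 ≤ ξ) (e : ℝ) :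
    modelDensity (s ^ (2 * e) * ξ) ≤ s ^ |e| * modelDensity ξ := by
  have hs0 : 0 ≤ s := zero_le_one.trans hs
  have hpow (p : ℝ) : (s ^ (2 * e) * ξ) ^ p = s ^ (2 * e * p) * ξ ^ p := by
    rw [mul_rpow (rpow_nonneg hs0 _) hξ, ← rpow_mul hs0]
  refine max_le ?_ ?_
  · rw [hpow, show 2 * e * (1 / 2) = e by ring]
    gcongr
    · exact le_abs_self e
    · exact le_max_left _ _
  · rw [hpow, show 2 * e * (-1 / 2) = -e by ring]
    gcongr
    · exact neg_le_abs e
    · exact le_max_right _ _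

lemma spectralDensityBounds_of_le_of_le
    (hρs : ∀ ξ : ℝ, 0 < ξ → ξ ≤ 1 →
      c₁ * ξ ^ (-(1 : ℝ) / 2) ≤ ρ ξ ∧ ρ ξ ≤ c₂ * ξ ^ (-(1 : ℝ) / 2))
    (hρl : ∀ ξ : ℝ, 1 ≤ ξ → c₁ * ξ ^ ((1 : ℝ) / 2) ≤ ρ ξ ∧ ρ ξ ≤ c₂ * ξ ^ ((1 : ℝ) / 2)) :
    SpectralDensityBounds ρ c₁ c₂ := by
  intro ξ hξ
  rcases le_total ξ 1 with hξ₁ | hξ₁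
  · rw [modelDensity_of_le_one hξ hξ₁]; exact hρs ξ hξ hξ₁
  · rw [modelDensity_of_one_le hξ₁]; exact hρl ξ hξ₁

namespace SpectralDensityBounds

lemma le (hρ : SpectralDensityBounds ρ c₁ c₂) : c₁ ≤ c₂ :=
  le_of_mul_le_mul_right ((hρ 1 one_pos).1.trans (hρ 1 one_pos).2) (modelDensity_pos one_pos)

lemma pos (hρ : SpectralDensityBounds ρ c₁ c₂) (hc₁ : 0 < c₁) (hξ : 0 < ξ) : 0 < ρ ξ :=
  (mul_pos hc₁ (modelDensity_pos hξ)).trans_le (hρ ξ hξ).1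

lemma rpow_mul_le (hρ : SpectralDensityBounds ρ c₁ c₂) (hc₁ : 0 < c₁) (hs : 1 ≤ s)
    (hξ : 0 < ξ) (e : ℝ) :
    ρ (s ^ (2 * e) * ξ) ≤ c₂ / c₁ * s ^ |e| * ρ ξ := by
  have hξ' : 0 < s ^ (2 * e) * ξ := by have := zero_lt_one.trans_le hs; positivity
  have hc₂ : 0 ≤ c₂ := hc₁.le.trans hρ.le
  have hm : modelDensity ξ ≤ ρ ξ / c₁ := (le_div_iff₀' hc₁).2 (hρ ξ hξ).1
  calc ρ (s ^ (2 * e) * ξ) ≤ c₂ * (s ^ |e| * (ρ ξ / c₁)) := by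
        refine (hρ _ hξ').2.trans (mul_le_mul_of_nonneg_left ?_ hc₂)
        exact (modelDensity_rpow_mul_le hs hξ.le e).trans (by gcongr)
    _ = c₂ / c₁ * s ^ |e| * ρ ξ := by ring

lemma rpow_ratio_le (hρ : SpectralDensityBounds ρ c₁ c₂) (hc₁ : 0 < c₁) (hs : 1 ≤ s)
    (hξ : 0 < ξ) (e : ℝ) :
    ρ ξ ^ (-(1 : ℝ) / 2) * ρ (s ^ (2 * e) * ξ) ^ ((1 : ℝ) / 2)
      ≤ (c₂ / c₁) ^ ((1 : ℝ) / 2) * s ^ (|e| / 2) := by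
  have hs0 : 0 < s := zero_lt_one.trans_le hs
  have hρξ := hρ.pos hc₁ hξ
  have hK : 0 < c₂ / c₁ := div_pos (hc₁.trans_le hρ.le) hc₁
  calc ρ ξ ^ (-(1 : ℝ) / 2) * ρ (s ^ (2 * e) * ξ) ^ ((1 : ℝ) / 2)
      ≤ ρ ξ ^ (-(1 : ℝ) / 2) * (c₂ / c₁ * s ^ |e| * ρ ξ) ^ ((1 : ℝ) / 2) := by
        have := hρ.pos hc₁ (show 0 < s ^ (2 * e) * ξ by positivity)
        gcongr
        exact hρ.rpow_mul_le hc₁ hs hξ e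
    _ = (c₂ / c₁) ^ ((1 : ℝ) / 2) * s ^ (|e| / 2) := by
        rw [← exp_log hK, ← exp_log hs0, ← exp_log hρξ]
        simp only [← exp_mul, ← exp_add]
        congr 1
        ring

end SpectralDensityBounds

end Density

lemma Hker_eq (ν : ℝ) (ρ : ℝ → ℝ) (Φ₀ Φ₁ : ℝ → ℝ → ℝ) (τ σ ξ : ℝ) :
    Hker ν ρ Φ₀ Φ₁ τ σ ξ = lamt ν τ ^ ((5 : ℝ) / 2) * (lamt ν σ ^ ((5 : ℝ) / 2))⁻¹ *
      (ρ ξ ^ (-(1 : ℝ) / 2) * ρ ((σ / τ) ^ (2 * (1 / ν - 1)) * ξ) ^ ((1 : ℝ) / 2)) *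
      cauchyKernel Φ₀ Φ₁ (ξ * τ ^ (-2 * (1 / ν - 1))) τ σ := by
  rw [Hker, cauchyKernel]; ring

lemma abs_Hker_le {ν : ℝ} {ρ : ℝ → ℝ} {Φ₀ Φ₁ : ℝ → ℝ → ℝ} {c₁ c₂ τ σ ξ : ℝ} (hν : 0 < ν)
    (hc₁ : 0 < c₁) (hρ : SpectralDensityBounds ρ c₁ c₂)
    (hτ : 0 < τ) (hτσ : τ ≤ σ) (hξ : 0 < ξ) :
    |Hker ν ρ Φ₀ Φ₁ τ σ ξ| ≤ (c₂ / c₁) ^ ((1 : ℝ) / 2) * (σ / τ) ^ (3 * |1 / ν - 1|) *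
      |cauchyKernel Φ₀ Φ₁ (ξ * τ ^ (-2 * (1 / ν - 1))) τ σ| := by
  have hσ := hτ.trans_le hτσ
  have hs : 1 ≤ σ / τ := (one_le_div hτ).2 hτσ
  have hρξ := hρ.pos hc₁ hξ
  have hρξ' := hρ.pos hc₁ (show 0 < (σ / τ) ^ (2 * (1 / ν - 1)) * ξ by positivity)
  have hlamt (t : ℝ) (ht : 0 < t) : 0 < lamt ν t := by unfold lamt; positivity
  have hlamtτ := hlamt τ hτ
  have hlamtσ := hlamt σ hσ
  rw [Hker_eq, abs_mul, abs_mul, abs_of_pos (by positivity), abs_of_pos (by positivity),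
    lamt_rpow_mul_inv hν hτ hσ]
  have hpow : (σ / τ) ^ (5 / 2 * |1 / ν - 1|) * (σ / τ) ^ (|1 / ν - 1| / 2)
      = (σ / τ) ^ (3 * |1 / ν - 1|) := by
    rw [← rpow_add (zero_lt_one.trans_le hs)]; ring_nf
  calc _ ≤ (σ / τ) ^ (5 / 2 * |1 / ν - 1|) *
        ((c₂ / c₁) ^ ((1 : ℝ) / 2) * (σ / τ) ^ (|1 / ν - 1| / 2)) *
        |cauchyKernel Φ₀ Φ₁ (ξ * τ ^ (-2 * (1 / ν - 1))) τ σ| := by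
        refine mul_le_mul_of_nonneg_right (mul_le_mul ?_ (hρ.rpow_ratio_le hc₁ hs hξ _)
          (by positivity) (by positivity)) (abs_nonneg _)
        exact rpow_le_rpow_of_exponent_le hs (by linarith [le_abs_self (1 / ν - 1)])
    _ = _ := by rw [← hpow]; ring

lemma le_mul_rpow_mul_of_le {h f K M s e X : ℝ} (hK : 0 ≤ K) (hs : 0 < s)
    (hh : h ≤ K * s ^ (3 * e) * f) (hf : f ≤ M * s ^ (e / 2) * X) :
    h ≤ K * M * s ^ ((7 : ℝ) / 2 * e) * X :=
  calc h ≤ K * s ^ (3 * e) * (M * s ^ (e / 2) * X) := hh.trans (by gcongr)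
    _ = K * M * s ^ ((7 : ℝ) / 2 * e) * X := by
        rw [show (7 : ℝ) / 2 * e = 3 * e + e / 2 by ring, rpow_add hs]; ring

/-- **Lemma 3.8**: bounds for the kernel `H_c`. -/
theorem kernel_Hc_bounds :
    ∃ ε₀ > (0 : ℝ), ∀ ν : ℝ, ν ≠ 1 → |ν - 1| < ε₀ →
    ∀ ρ : ℝ → ℝ, ∀ c₁ c₂ : ℝ, 0 < c₁ →
      (∀ ξ : ℝ, 0 < ξ → ξ ≤ 1 →
        c₁ * ξ ^ (-(1 : ℝ) / 2) ≤ ρ ξ ∧ ρ ξ ≤ c₂ * ξ ^ (-(1 : ℝ) / 2)) →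
      (∀ ξ : ℝ, 1 ≤ ξ →
        c₁ * ξ ^ ((1 : ℝ) / 2) ≤ ρ ξ ∧ ρ ξ ≤ c₂ * ξ ^ ((1 : ℝ) / 2)) →
    ∀ Φ₀ Φ₁ : ℝ → ℝ → ℝ, ∀ C₀ : ℝ,
      -- `Φⱼ(γ,·)` solve `y'' + γτ^{2(1/ν-1)}y = 0`
      (∀ γ > (0 : ℝ), ∀ τ > (0 : ℝ),
        deriv (deriv (Φ₀ γ)) τ + γ * τ ^ (2 * (1 / ν - 1)) * Φ₀ γ τ = 0 ∧
        deriv (deriv (Φ₁ γ)) τ + γ * τ ^ (2 * (1 / ν - 1)) * Φ₁ γ τ = 0) →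
      -- small-argument asymptotics
      (∀ γ > (0 : ℝ), ∀ τ > (0 : ℝ), γ ^ ((1 : ℝ) / 2) * τ ^ (1 / ν) ≤ 1 →
        |Φ₀ γ τ - γ ^ (ν / 4) * τ| ≤ C₀ * (γ ^ (ν / 4) * τ) * (γ * τ ^ (2 / ν)) ∧
        |Φ₁ γ τ - γ ^ (-ν / 4)| ≤ C₀ * γ ^ (-ν / 4) * (γ ^ (ν / 2) * τ)) →
      -- large-argument bounds
      (∀ γ > (0 : ℝ), ∀ τ > (0 : ℝ), 1 ≤ γ ^ ((1 : ℝ) / 2) * τ ^ (1 / ν) →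
        |Φ₀ γ τ| ≤ C₀ * γ ^ (-(1 : ℝ) / 4) * τ ^ (-(1 / ν - 1) / 2) ∧
        |Φ₁ γ τ| ≤ C₀ * γ ^ (-(1 : ℝ) / 4) * τ ^ (-(1 / ν - 1) / 2)) →
    ∃ C : ℝ, ∀ τ σ ξ : ℝ, 1 ≤ τ → τ ≤ σ → 0 < ξ →
      (1 ≤ τ * ξ ^ ((1 : ℝ) / 2) → 1 ≤ σ * ξ ^ ((1 : ℝ) / 2) →
        |Hker ν ρ Φ₀ Φ₁ τ σ ξ|
          ≤ C * (σ / τ) ^ ((7 : ℝ) / 2 * |1 / ν - 1|) * ξ ^ (-(1 : ℝ) / 2)) ∧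
      (τ * ξ ^ ((1 : ℝ) / 2) ≤ 1 → 1 ≤ σ * ξ ^ ((1 : ℝ) / 2) →
        |Hker ν ρ Φ₀ Φ₁ τ σ ξ|
          ≤ C * (σ / τ) ^ ((7 : ℝ) / 2 * |1 / ν - 1|) * τ ^ ((1 - ν) / 2)
            * ξ ^ (-(1 + ν) / 4)) ∧
      (τ * ξ ^ ((1 : ℝ) / 2) ≤ 1 → σ * ξ ^ ((1 : ℝ) / 2) ≤ 1 →
        |Hker ν ρ Φ₀ Φ₁ τ σ ξ|
          ≤ C * (σ / τ) ^ ((7 : ℝ) / 2 * |1 / ν - 1|) * σ) := by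
  refine ⟨1, one_pos, fun ν _ hν ρ c₁ c₂ hc₁ hρs hρl Φ₀ Φ₁ C₀ _ hsm hlg => ?_⟩
  have hν0 : 0 < ν := by linarith [(abs_lt.1 hν).1]
  have hρ := spectralDensityBounds_of_le_of_le hρs hρl
  have hK : 0 ≤ (c₂ / c₁) ^ ((1 : ℝ) / 2) :=
    rpow_nonneg (div_nonneg (hc₁.le.trans hρ.le) hc₁.le) _
  refine ⟨(c₂ / c₁) ^ ((1 : ℝ) / 2) * (2 * (1 + C₀) ^ 2), fun τ σ ξ hτ hτσ hξ => ?_⟩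
  have hτ0 : 0 < τ := zero_lt_one.trans_le hτ
  have hs : 1 ≤ σ / τ := (one_le_div hτ0).2 hτσ
  have hH := abs_Hker_le (Φ₀ := Φ₀) (Φ₁ := Φ₁) hν0 hc₁ hρ hτ0 hτσ hξ
  have hs0 : 0 < σ / τ := zero_lt_one.trans_le hs
  refine ⟨fun hx _ => ?_, fun hx _ => ?_, fun hx _ => ?_⟩
  · exact le_mul_rpow_mul_of_le hK hs0 hH
      (abs_cauchyKernel_rescaled_le_of_one_le hlg hν0 hτ0 hτσ hξ hx)
  · refine (le_mul_rpow_mul_of_le hK hs0 hH ?_).trans_eq (mul_assoc _ _ _).symm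
    exact (abs_cauchyKernel_rescaled_le_of_le_one hsm hlg hν0 hτ0 hτσ hξ hx).1
  · refine le_mul_rpow_mul_of_le hK hs0 hH ?_
    calc _ ≤ 2 * (1 + C₀) ^ 2 * 1 * σ := by
          rw [mul_one]
          exact (abs_cauchyKernel_rescaled_le_of_le_one hsm hlg hν0 hτ0 hτσ hξ hx).2
      _ ≤ _ := by
          have := LargeArgBounds.nonneg hlg
          gcongr
          · exact (hτ0.trans_le hτσ).le
          · exact one_le_rpow hs (by positivity)

end
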